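/- arXiv:2605.31071 — 3 statements merged into one kernel-verified Lean document; each statement's English description precedes it below -/
import Mathlib

section
/- Let N be a network, T a tree on the same leaf set, F a downward-closed subforest of T, and φ a pseudo-embedding of F into N. Let xz and yz be arcs of N with x ≠ y, and let a and b be arcs of F such that the path φ(a) contains the arc xz. Then the path φ(b) does not contain the arc yz. -/
namespace Phylo

noncomputable section

attribute [local instance] Classical.propDecidable

/-- An arc set over vertex type `V`: a finite directed graph given by its arcs. -/
abbrev ArcSet (V : Type) := Finset (V × V)

section Basic

variable {V : Type} [DecidableEq V]

/-- The nodes of the digraph: all endpoints of arcs. -/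
def nodes (A : ArcSet V) : Finset V := A.image Prod.fst ∪ A.image Prod.snd

/-- The arc relation of the digraph. -/
def arcRel (A : ArcSet V) : V → V → Prop := fun u v => (u, v) ∈ A

/-- `Reach A u v`: `v` is reachable from `u` by a directed path, i.e. `v ≤_A u`. -/
def Reach (A : ArcSet V) (u v : V) : Prop := Relation.ReflTransGen (arcRel A) u v

/-- `SReach A u v`: `v` is reachable from `u` by a directed path of length ≥ 1,
i.e. `v <_A u` (in a DAG). -/
def SReach (A : ArcSet V) (u v : V) : Prop := Relation.TransGen (arcRel A) u v

def indeg (A : ArcSet V) (v : V) : ℕ := (A.filter fun a => a.2 = v).card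

def outdeg (A : ArcSet V) (v : V) : ℕ := (A.filter fun a => a.1 = v).card

def inArcs (A : ArcSet V) (v : V) : Finset (V × V) := A.filter fun a => a.2 = v

def outArcs (A : ArcSet V) (v : V) : Finset (V × V) := A.filter fun a => a.1 = v

/-- The leaves: nodes of out-degree zero (identified with their labels). -/
def leaves (A : ArcSet V) : Finset V := (nodes A).filter fun v => outdeg A v = 0

def Acyclic (A : ArcSet V) : Prop := ∀ v : V, ¬ SReach A v v

/-- A (phylogenetic) network: a finite DAG with a unique in-degree-zero node (the root)
in which every node has in-degree one or out-degree one.  Leaves are identified with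
their labels, so a network "on leaf set L" is one with `leaves A = L`. -/
structure IsNetwork (A : ArcSet V) : Prop where
  acyclic : Acyclic A
  unique_root : ∃! r : V, r ∈ nodes A ∧ indeg A r = 0
  degree_cond : ∀ v ∈ nodes A, indeg A v = 1 ∨ outdeg A v = 1

/-- A (phylogenetic) tree: a network with no node of in-degree at least two. -/
def IsPhyloTree (A : ArcSet V) : Prop := IsNetwork A ∧ ∀ v ∈ nodes A, indeg A v ≤ 1

/-- The descendant order extended to arcs: `a ≤_A b` iff `a = b` or the tail of `a`
is reachable from the head of `b`. -/
def ArcLE (A : ArcSet V) (a b : V × V) : Prop := a = b ∨ Reach A b.2 a.1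

/-- Strict version of `ArcLE`. -/
def ArcLT (A : ArcSet V) (a b : V × V) : Prop := ArcLE A a b ∧ a ≠ b

/-- The (arc set of the) forest `T_S` below the arc set `S`. -/
def below (A : ArcSet V) (S : Finset (V × V)) : Finset (V × V) :=
  A.filter fun a => ∃ s ∈ S, ArcLE A a s

/-- `F` is a downward-closed subforest of the tree with arc set `AT`. -/
def IsDCSubforest (AT : ArcSet V) (F : Finset (V × V)) : Prop :=
  ∃ S : Finset (V × V), S ⊆ AT ∧ S.Nonempty ∧ F = below AT S

/-- The top-arc set of `F`: the maximal arcs of `F` with respect to `ArcLE`. -/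
def topArcs (A : ArcSet V) (F : Finset (V × V)) : Finset (V × V) :=
  F.filter fun a => ∀ b ∈ F, ArcLE A a b → a = b

/-- `S` is an antichain of arcs with respect to the strict order `ArcLT`. -/
def ArcAntichain (A : ArcSet V) (S : Finset (V × V)) : Prop :=
  ∀ a ∈ S, ∀ b ∈ S, ¬ ArcLT A a b

/-- The leaves of `T` lying below some arc of `F` (the leaf set of a
downward-closed subforest with arc set `F`, and of `T_F`). -/
def forestLeaves (AT : ArcSet V) (F : Finset (V × V)) : Finset V :=
  (leaves AT).filter fun l => ∃ a ∈ F, Reach AT a.2 l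

/-- `L(T_y)`: leaves of `T` below the node `y`. -/
def leavesBelow (AT : ArcSet V) (y : V) : Finset V :=
  (leaves AT).filter fun l => Reach AT y l

/-- A directed path of length ≥ 1, given by its list of vertices. -/
def IsDipath (A : ArcSet V) (p : List V) : Prop :=
  2 ≤ p.length ∧ p.Chain' (arcRel A)

/-- The arcs of a path given by its vertex list. -/
def pathArcs (p : List V) : List (V × V) := p.zip p.tail

/-- The path `p` begins with the arc `e`. -/
def startsWith (p : List V) (e : V × V) : Prop := (pathArcs p).head? = some e

/-- The origin of the path `p` is `v`. -/
def originIs (p : List V) (v : V) : Prop := p.head? = some v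

/-- A pseudo-embedding of the (downward-closed sub)forest with arc set `F` of the tree
`AT` into the network `AN`: each arc of `F` is mapped to a directed path of length ≥ 1
in `AN` such that (a) consecutive arcs yield composable paths, (b) distinct arcs yield
arc-disjoint paths, and (c) an arc into a leaf `l` of `T` is mapped to a path ending
at the equally-labelled leaf `l` of `N`. -/
structure IsPseudoEmbedding (AT AN : ArcSet V) (F : Finset (V × V))
    (phi : V × V → List V) : Prop where
  isPath : ∀ a ∈ F, IsDipath AN (phi a)
  comp : ∀ x y z : V, (x, y) ∈ F → (y, z) ∈ F →
    (phi (x, y)).getLast? = (phi (y, z)).head?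
  disjoint : ∀ a ∈ F, ∀ b ∈ F, a ≠ b → ∀ e ∈ pathArcs (phi a), e ∉ pathArcs (phi b)
  leaf : ∀ x l : V, (x, l) ∈ F → l ∈ leaves AT → (phi (x, l)).getLast? = some l

/-- A rooted tree (as a digraph): acyclic, every node has in-degree at most one,
and there is a root from which every node is reachable. -/
def IsRootedTree (A : ArcSet V) : Prop :=
  Acyclic A ∧ (∀ v ∈ nodes A, indeg A v ≤ 1) ∧
    ∃ r ∈ nodes A, indeg A r = 0 ∧ ∀ v ∈ nodes A, Reach A r v

/-- `AΓ` is a tree extension of the DAG `AN`: a rooted tree on the same node set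
whose descendant order contains that of `AN`. -/
def IsTreeExtension (AN AG : ArcSet V) : Prop :=
  IsRootedTree AG ∧ nodes AG = nodes AN ∧ ∀ u v : V, SReach AN u v → SReach AG u v

/-- The node set of the subtree `Γ_v` of `Γ` rooted at `v`. -/
def gammaSub (AG : ArcSet V) (v : V) : Finset V := (nodes AG).filter fun u => Reach AG v u

/-- `L(Γ_v)`: the leaves of `Γ` in the subtree rooted at `v`. -/
def gammaLeaves (AG : ArcSet V) (v : V) : Finset V := (leaves AG).filter fun u => Reach AG v u

/-- Weak connectivity of the subgraph of `A` induced by the vertex set `Sv`. -/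
def WeaklyConnectedOn (A : ArcSet V) (Sv : Finset V) : Prop :=
  ∀ u ∈ Sv, ∀ w ∈ Sv,
    Relation.ReflTransGen (fun x y => x ∈ Sv ∧ y ∈ Sv ∧ ((x, y) ∈ A ∨ (y, x) ∈ A)) u w

/-- A canonical tree extension: a tree extension such that every subtree induces a
weakly connected subgraph of the underlying DAG. -/
def IsCanonicalTreeExtension (AN AG : ArcSet V) : Prop :=
  IsTreeExtension AN AG ∧ ∀ v ∈ nodes AG, WeaklyConnectedOn AN (gammaSub AG v)

/-- `GW_v(Γ)`: the arcs `xy` of the DAG with `x` strictly above `v` in `Γ` and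
`y` below or equal to `v` in `Γ`. -/
def GW (AN AG : ArcSet V) (v : V) : Finset (V × V) :=
  AN.filter fun a => SReach AG a.1 v ∧ Reach AG v a.2

/-- The part of the `v`-split of `Y` belonging to the child `q`. -/
def splitPart (AT AG : ArcSet V) (q : V) (Y : Finset (V × V)) : Finset (V × V) :=
  Y.filter fun a => leavesBelow AT a.2 ⊆ gammaLeaves AG q

/-- `ψ` is a valid map on the arc set `S`: injective, and every arc `xy ∈ S` is
mapped to an arc `wz` with `L(T_y) ⊆ L(Γ_z)`. -/
def ValidMap (AT AG : ArcSet V) (S : Finset (V × V)) (psi : V × V → V × V) : Prop :=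
  Set.InjOn psi ↑S ∧ ∀ a ∈ S, leavesBelow AT a.2 ⊆ gammaLeaves AG (psi a).2

/-- `S` is a top-arc set for the leaf set `L'`: an antichain of arcs of `T` such that
the leaf set of `T_S` equals `L'`. -/
def IsTopArcSetFor (AT : ArcSet V) (S : Finset (V × V)) (L' : Finset V) : Prop :=
  S ⊆ AT ∧ ArcAntichain AT S ∧ forestLeaves AT S = L'

/-- Contraction of the arc `uv`: remove `v` and the arc `uv`, and redirect every other
arc incident with `v` to `u` instead. -/
def contractArc (A : ArcSet V) (u v : V) : ArcSet V :=
  (A.erase (u, v)).image fun a => (if a.1 = v then u else a.1, if a.2 = v then u else a.2)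

/-- `p` is a directed path from `x` to `y` in `A`. -/
def IsPathFrom (A : ArcSet V) (p : List V) (x y : V) : Prop :=
  p.head? = some x ∧ p.getLast? = some y ∧ p.Chain' (arcRel A)

/-- The family of demands `D` is satisfied in `A`: there are pairwise arc-disjoint
directed paths, one from `x` to `y` for each demand `(x, y) ∈ D`. -/
def SatisfiesDemands (A : ArcSet V) (D : Finset (V × V)) : Prop :=
  ∃ p : V × V → List V,
    (∀ d ∈ D, IsPathFrom A (p d) d.1 d.2) ∧
      ∀ d ∈ D, ∀ d' ∈ D, d ≠ d' → ∀ e ∈ pathArcs (p d), e ∉ pathArcs (p d')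

/-- One subdivision step: replace an arc `xy` by the two arcs `xw`, `wy` for a
fresh vertex `w`. -/
def SubdivStep {W : Type} [DecidableEq W] (A A' : Finset (W × W)) : Prop :=
  ∃ x y w : W, (x, y) ∈ A ∧ w ∉ nodes A ∧
    A' = insert (x, w) (insert (w, y) (A.erase (x, y)))

/-- `AN` displays `AT`: some DAG obtained from `AT` by repeatedly subdividing arcs
(with fresh vertices drawn from `V ⊕ ℕ`) admits a leaf-respecting isomorphism onto a
subgraph of `AN`. -/
def Displays (AN AT : ArcSet V) : Prop :=
  ∃ (A' : Finset ((V ⊕ ℕ) × (V ⊕ ℕ))) (iota : V ⊕ ℕ → V),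
    Relation.ReflTransGen SubdivStep
      (AT.image fun a => ((Sum.inl a.1 : V ⊕ ℕ), (Sum.inl a.2 : V ⊕ ℕ))) A' ∧
    Set.InjOn iota ↑(nodes A') ∧
    (∀ a ∈ A', (iota a.1, iota a.2) ∈ AN) ∧
    ∀ l ∈ leaves AT, iota (Sum.inl l) = l

end Basic

section Ordered

variable {V : Type} [LinearOrder V]

/-- The list of children of `v` in `Γ`, in increasing order; the `j`-th child `q_j`
is the entry at index `j - 1`. -/
def childrenList (A : ArcSet V) (v : V) : List V :=
  ((A.filter fun a => a.1 = v).image Prod.snd).sort (· ≤ ·)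

/-- `Y` is `v`-splittable: every arc of `Y` belongs to the part of the `v`-split
corresponding to some child of `v` in `Γ`. -/
def VSplittable (AT AG : ArcSet V) (v : V) (Y : Finset (V × V)) : Prop :=
  ∀ a ∈ Y, ∃ q ∈ childrenList AG v, a ∈ splitPart AT AG q Y

/-- `⋃_{i ≤ j} Y_i`: the arcs of `Y` in the split parts of the first `j` children
of `v` in `Γ`. -/
def unionUpTo (AT AG : ArcSet V) (v : V) (j : ℕ) (Y : Finset (V × V)) : Finset (V × V) :=
  Y.filter fun a => ∃ q ∈ (childrenList AG v).take j, leavesBelow AT a.2 ⊆ gammaLeaves AG q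

/-- `(v, S, ψ, j)` is a signature. -/
def IsSignature (AN AG AT : ArcSet V) (v : V) (S : Finset (V × V))
    (psi : V × V → V × V) (j : ℕ) : Prop :=
  v ∈ nodes AN ∧ j ≤ (childrenList AG v).length ∧
    IsTopArcSetFor AT S (gammaLeaves AG v) ∧
    (∀ a ∈ S, psi a ∈ GW AN AG v) ∧ ValidMap AT AG S psi

/-- The dynamic-programming predicate `χ[v, S, ψ, j]`. -/
def Chi (AN AG AT : ArcSet V) (v : V) (S : Finset (V × V))
    (psi : V × V → V × V) (j : ℕ) : Prop :=
  -- case (a)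
  (j = 0 ∧ (VSplittable AT AG v S ∨
    ∃ a ∈ S, psi a ∈ inArcs AN v ∧ VSplittable AT AG v (S.erase a))) ∨
  -- case (b)
  (0 < j ∧ VSplittable AT AG v S ∧
    ∃ phi : V × V → List V,
      IsPseudoEmbedding AT AN (below AT (unionUpTo AT AG v j S)) phi ∧
        ∀ a ∈ unionUpTo AT AG v j S, startsWith (phi a) (psi a)) ∨
  -- case (c)
  (0 < j ∧ ∃ a ∈ S, psi a ∈ inArcs AN v ∧ VSplittable AT AG v (S.erase a) ∧
    (outArcs AT a.2).Nonempty ∧ VSplittable AT AG v (outArcs AT a.2) ∧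
    ∃ phi : V × V → List V,
      IsPseudoEmbedding AT AN
        (below AT (unionUpTo AT AG v j (S.erase a) ∪ unionUpTo AT AG v j (outArcs AT a.2)))
        phi ∧
      (∀ b ∈ unionUpTo AT AG v j (S.erase a), startsWith (phi b) (psi b)) ∧
      ∀ b ∈ unionUpTo AT AG v j (outArcs AT a.2), originIs (phi b) v)

end Ordered

end

end Phylo

open Phylo

/-!
Two arcs `xz`, `yz` of `N` give `z` in-degree at least two, so `z` has a single out-arc `zw`
and is not a leaf. Since `F` is downward closed, every path of `φ` entering `z` is continued
through `zw`, either by itself or by the path of a child arc, which starts at `z`. Arc-disjointness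
makes these continuations one path `φ(c)`. By acyclicity of `N`, `φ(c)` neither enters `z` twice
nor starts at `z` and enters it again, so `c` is a child of both `a` and `b`; as `T` is a tree,
`a = b`, and `φ(a)` enters `z` twice.
-/

namespace Phylo

variable {V : Type}

@[simp] lemma pathArcs_nil : pathArcs ([] : List V) = [] := rfl

@[simp] lemma pathArcs_singleton (u : V) : pathArcs [u] = [] := rfl

@[simp] lemma pathArcs_cons_cons (u v : V) (l : List V) :
    pathArcs (u :: v :: l) = (u, v) :: pathArcs (v :: l) := rfl

lemma rel_of_mem_pathArcs {r : V → V → Prop} {p : List V} (hp : p.IsChain r) {u v : V}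
    (h : (u, v) ∈ pathArcs p) : r u v := by
  induction hp with
  | nil => simp at h
  | singleton => simp at h
  | cons_cons hab _ ih =>
    rcases List.mem_cons.1 h with h | h
    · obtain ⟨rfl, rfl⟩ := Prod.mk.inj h
      exact hab
    · exact ih h

lemma getLast?_eq_or_exists_mem_pathArcs {p : List V} {u v : V} (h : (u, v) ∈ pathArcs p) :
    p.getLast? = some v ∨ ∃ w, (v, w) ∈ pathArcs p := by
  induction p with
  | nil => simp at h
  | cons a l ih =>
    match l, h, ih with
    | [], h, _ => simp at h
    | [b], h, _ => simp_all
    | b :: c :: l, h, ih =>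
      rcases List.mem_cons.1 h with h | h
      · obtain ⟨rfl, rfl⟩ := Prod.mk.inj h
        exact Or.inr ⟨c, by simp⟩
      · rcases ih h with h' | ⟨w, hw⟩
        · exact Or.inl (by simpa using h')
        · exact Or.inr ⟨w, List.mem_cons_of_mem _ hw⟩

lemma fst_eq_of_mem_pathArcs {p : List V} (hp : p.Nodup) {x y z : V}
    (hx : (x, z) ∈ pathArcs p) (hy : (y, z) ∈ pathArcs p) : x = y := by
  have hsnd : (pathArcs p).map Prod.snd = p.tail := List.map_snd_zip (by simp)
  have := List.inj_on_of_nodup_map (hsnd ▸ hp.sublist (List.tail_sublist p)) hx hy rfl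
  exact congrArg Prod.fst this

lemma notMem_pathArcs_of_head?_eq {p : List V} (hp : p.Nodup) {x z : V}
    (hz : p.head? = some z) : (x, z) ∉ pathArcs p := by
  obtain ⟨t, rfl⟩ : ∃ t, p = z :: t := by
    cases p with
    | nil => simp at hz
    | cons a t => exact ⟨t, by simpa using hz⟩
  intro h
  exact (List.nodup_cons.1 hp).1 (List.of_mem_zip h).2

lemma Acyclic.nodup_of_isChain {A : ArcSet V} (hA : Acyclic A) {p : List V}
    (hp : p.IsChain (arcRel A)) : p.Nodup := by
  have hpair : p.Pairwise (Relation.TransGen (arcRel A)) :=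
    List.isChain_iff_pairwise.1 (hp.imp fun _ _ => .single)
  refine hpair.imp ?_
  rintro u _ h rfl
  exact hA u h

namespace IsDCSubforest

variable {AT : ArcSet V} {F : Finset (V × V)}

lemma subset (hF : IsDCSubforest AT F) : F ⊆ AT := by
  obtain ⟨S, -, -, rfl⟩ := hF
  intro a ha
  simp only [below, Finset.mem_filter] at ha
  exact ha.1

lemma child_mem (hF : IsDCSubforest AT F) {a : V × V} (ha : a ∈ F) {c : V}
    (hc : (a.2, c) ∈ AT) : (a.2, c) ∈ F := by
  obtain ⟨S, -, -, rfl⟩ := hF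
  simp only [below, Finset.mem_filter] at ha ⊢
  obtain ⟨haT, s, hs, hle⟩ := ha
  refine ⟨hc, s, hs, Or.inr ?_⟩
  rcases hle with rfl | hr
  · exact .refl
  · exact hr.tail haT

end IsDCSubforest

variable [DecidableEq V]

lemma snd_mem_nodes {A : ArcSet V} {a : V × V} (ha : a ∈ A) : a.2 ∈ nodes A :=
  Finset.mem_union_right _ (Finset.mem_image_of_mem _ ha)

lemma outdeg_eq_one_of_two_inArcs {A : ArcSet V} (hA : IsNetwork A) {x y z : V}
    (hxz : (x, z) ∈ A) (hyz : (y, z) ∈ A) (hxy : x ≠ y) : outdeg A z = 1 := by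
  have hz : z ∈ nodes A := snd_mem_nodes hxz
  have hin : 1 < indeg A z := Finset.one_lt_card.2
    ⟨(x, z), by simp [hxz], (y, z), by simp [hyz], by simp [hxy]⟩
  exact (hA.degree_cond z hz).resolve_left hin.ne'

lemma eq_of_outdeg_eq_one {A : ArcSet V} {z u u' : V} (hz : outdeg A z = 1)
    (hu : (z, u) ∈ A) (hu' : (z, u') ∈ A) : u = u' := by
  obtain ⟨e, he⟩ := Finset.card_eq_one.1 hz
  have h1 : (z, u) ∈ ({e} : Finset _) := he ▸ Finset.mem_filter.2 ⟨hu, rfl⟩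
  have h2 : (z, u') ∈ ({e} : Finset _) := he ▸ Finset.mem_filter.2 ⟨hu', rfl⟩
  simp only [Finset.mem_singleton] at h1 h2
  exact congrArg Prod.snd (h1.trans h2.symm)

lemma notMem_leaves_of_outdeg_eq_one {A : ArcSet V} {z : V} (hz : outdeg A z = 1) :
    z ∉ leaves A := by
  simp [leaves, hz]

lemma exists_arc_of_notMem_leaves {A : ArcSet V} {v : V} (hv : v ∈ nodes A)
    (hl : v ∉ leaves A) : ∃ c, (v, c) ∈ A := by
  have hout : (A.filter fun a => a.1 = v).Nonempty :=
    Finset.card_pos.1 (Nat.pos_of_ne_zero fun h => hl (Finset.mem_filter.2 ⟨hv, h⟩))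
  obtain ⟨⟨v', c⟩, hc⟩ := hout
  obtain ⟨hcA, rfl⟩ := Finset.mem_filter.1 hc
  exact ⟨c, hcA⟩

lemma IsPhyloTree.eq_of_snd_eq {A : ArcSet V} (hA : IsPhyloTree A) {a b : V × V}
    (ha : a ∈ A) (hb : b ∈ A) (hab : a.2 = b.2) : a = b := by
  by_contra hne
  have hin : 1 < indeg A a.2 := Finset.one_lt_card.2
    ⟨a, Finset.mem_filter.2 ⟨ha, rfl⟩, b, Finset.mem_filter.2 ⟨hb, hab.symm⟩, hne⟩
  exact (hA.2 _ (snd_mem_nodes ha)).not_gt hin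

lemma IsPseudoEmbedding.exists_arc_out {AT AN : ArcSet V} {F : Finset (V × V)}
    {phi : V × V → List V} (hphi : IsPseudoEmbedding AT AN F phi) (hF : IsDCSubforest AT F)
    {a : V × V} (ha : a ∈ F) {x z : V} (hmem : (x, z) ∈ pathArcs (phi a))
    (hz : z ∉ leaves AT) :
    ∃ c ∈ F, ∃ u, (z, u) ∈ pathArcs (phi c) ∧
      (c = a ∨ c.1 = a.2 ∧ (phi c).head? = some z) := by
  rcases getLast?_eq_or_exists_mem_pathArcs hmem with hlast | ⟨u, hu⟩
  · have ha2 : a.2 ∉ leaves AT := fun hl =>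
      hz (Option.some.inj (hlast.symm.trans (hphi.leaf a.1 a.2 ha hl)) ▸ hl)
    obtain ⟨c, hc⟩ := exists_arc_of_notMem_leaves (snd_mem_nodes (hF.subset ha)) ha2
    have hcF := hF.child_mem ha hc
    have hhead : (phi (a.2, c)).head? = some z := hlast ▸ (hphi.comp a.1 a.2 c ha hcF).symm
    obtain ⟨hlen, -⟩ := hphi.isPath _ hcF
    match hp : phi (a.2, c), hlen, hhead with
    | z' :: u :: l, _, hhead =>
      obtain rfl : z' = z := by simpa using hhead
      exact ⟨(a.2, c), hcF, u, by simp [hp], Or.inr ⟨rfl, by simp [hp]⟩⟩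
  · exact ⟨a, ha, u, hu, Or.inl rfl⟩

end Phylo

/-- paths in the image of a pseudo-embedding do not converge in the
same vertex: if `φ(a)` contains the arc `xz` then no `φ(b)` contains an arc `yz`
with `y ≠ x`. -/
theorem stmt4 {V : Type} [DecidableEq V] (AT AN : ArcSet V) (F : Finset (V × V))
    (phi : V × V → List V) (x y z : V) (a b : V × V)
    (hT : IsPhyloTree AT) (hN : IsNetwork AN) (hleaf : leaves AN = leaves AT)
    (hF : IsDCSubforest AT F)
    (hphi : IsPseudoEmbedding AT AN F phi)
    (hxz : (x, z) ∈ AN) (hyz : (y, z) ∈ AN) (hxy : x ≠ y)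
    (ha : a ∈ F) (hb : b ∈ F)
    (hmem : (x, z) ∈ pathArcs (phi a)) :
    (y, z) ∉ pathArcs (phi b) := by
  intro hby
  have hout := outdeg_eq_one_of_two_inArcs hN hxz hyz hxy
  have hz : z ∉ leaves AT := hleaf ▸ notMem_leaves_of_outdeg_eq_one hout
  have hnodup : ∀ e ∈ F, (phi e).Nodup := fun e he =>
    hN.acyclic.nodup_of_isChain (hphi.isPath e he).2
  obtain ⟨c, hc, u, hcu, hca⟩ := hphi.exists_arc_out hF ha hmem hz
  obtain ⟨d, hd, u', hdu, hdb⟩ := hphi.exists_arc_out hF hb hby hz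
  have huu : u = u' := eq_of_outdeg_eq_one hout
    (rel_of_mem_pathArcs (hphi.isPath c hc).2 hcu) (rel_of_mem_pathArcs (hphi.isPath d hd).2 hdu)
  obtain rfl : c = d := by
    by_contra hcd
    exact hphi.disjoint c hc d hd hcd (z, u) hcu (huu ▸ hdu)
  rcases hca with rfl | ⟨hca, hhead⟩ <;> rcases hdb with rfl | ⟨hcb, hhead'⟩
  · exact hxy (fst_eq_of_mem_pathArcs (hnodup c hc) hmem hby)
  · exact notMem_pathArcs_of_head?_eq (hnodup c hc) hhead' hmem
  · exact notMem_pathArcs_of_head?_eq (hnodup c hc) hhead hby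
  · obtain rfl := hT.eq_of_snd_eq (hF.subset ha) (hF.subset hb) (hca.symm.trans hcb)
    exact hxy (fst_eq_of_mem_pathArcs (hnodup a ha) hmem hby)
end

section
/- Let N be a network with canonical tree extension Γ, T a tree on the same leaf set, (v, S, ψ, j) a signature with j > 0, q_j the j-th child of v in Γ, S_j := {wz ∈ S : L(T_z) ⊆ L(Γ_{q_j})}, ψ_j the restriction of ψ to S_j, and Z := {xy ∈ S : ψ(xy) is an in-arc of v in N}. Then: (i) if Z = ∅, then (q_j, S_j, ψ_j, outdeg_Γ(q_j)) is a signature; (ii) if Z = {xy}, the set Y of out-arcs of y in T is v-splittable into (Y_1, Y_2, …), vw is an out-arc of v in N with L(T_y) ⊆ L(Γ_w), and Y_j = Y, then (q_j, S_j, ψ_j[xy ↦ vw], outdeg_Γ(q_j)) is a signature, where ψ_j[xy ↦ vw] re-points xy to vw; (iii) if Z = {xy}, the set Y of out-arcs of y in T is v-splittable into (Y_1, Y_2, …), Y_j ≠ ∅, and ψ'_j : Y_j → GW_{q_j}(Γ) is a valid injective map whose image is disjoint from ψ_j(S_j ∖ {xy}), then (q_j, (S_j ∖ {xy}) ∪ Y_j,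 ψ_j|_{S_j∖{xy}} ∪ ψ'_j, outdeg_Γ(q_j)) is a signature. -/
namespace Phylo

noncomputable section

attribute [local instance] Classical.propDecidable

end

end Phylo

open Phylo

section StmtNineHelpers

attribute [local instance] Classical.propDecidable

variable {V : Type} [DecidableEq V]

lemma mem_nodes_fst' {A : ArcSet V} {a : V × V} (h : a ∈ A) : a.1 ∈ nodes A :=
  Finset.mem_union_left _ (Finset.mem_image_of_mem _ h)

lemma mem_nodes_snd' {A : ArcSet V} {a : V × V} (h : a ∈ A) : a.2 ∈ nodes A :=
  Finset.mem_union_right _ (Finset.mem_image_of_mem _ h)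

lemma eq_of_indeg_le_one' {A : ArcSet V} {x y m : V}
    (hdeg : indeg A m ≤ 1) (hx : (x, m) ∈ A) (hy : (y, m) ∈ A) : x = y := by
  have hx' : (x, m) ∈ A.filter (fun a => a.2 = m) := Finset.mem_filter.mpr ⟨hx, rfl⟩
  have hy' : (y, m) ∈ A.filter (fun a => a.2 = m) := Finset.mem_filter.mpr ⟨hy, rfl⟩
  have := Finset.card_le_one.mp hdeg _ hx' _ hy'
  exact congrArg Prod.fst this

lemma reach_comparable' {A : ArcSet V} (hdeg : ∀ v ∈ nodes A, indeg A v ≤ 1) {q q' l : V}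
    (h1 : Reach A q l) (h2 : Reach A q' l) : Reach A q q' ∨ Reach A q' q := by
  induction h1 using Relation.ReflTransGen.head_induction_on with
  | refl => exact Or.inr h2
  | head hqm hml ih =>
    rename_i q m
    rcases ih with h | h
    · exact Or.inl (Relation.ReflTransGen.head hqm h)
    · by_cases hqm' : q' = m
      · exact Or.inl (hqm' ▸ Relation.ReflTransGen.single hqm)
      · rcases Relation.ReflTransGen.cases_tail h with h' | ⟨u, hqu, hum⟩
        · exact absurd h'.symm hqm'
        · have hm : m ∈ nodes A := mem_nodes_snd' (a := (q, m)) hqm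
          have : u = q := eq_of_indeg_le_one' (hdeg m hm) hum hqm
          exact Or.inr (this ▸ hqu)

lemma child_unique' {A : ArcSet V} (hac : Acyclic A)
    (hdeg : ∀ v ∈ nodes A, indeg A v ≤ 1) {v q q' l : V}
    (hq : (v, q) ∈ A) (hq' : (v, q') ∈ A)
    (h1 : Reach A q l) (h2 : Reach A q' l) : q = q' := by
  have aux : ∀ a b : V, (v, a) ∈ A → (v, b) ∈ A → Reach A a b → a = b := by
    intro a b ha hb h
    by_contra hne
    rcases Relation.ReflTransGen.cases_tail h with h' | ⟨u, hau, hub⟩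
    · exact hne h'.symm
    · have : u = v := eq_of_indeg_le_one' (hdeg b (mem_nodes_snd' (a := (v, b)) hb)) hub hb
      exact hac a (Relation.TransGen.tail' (this ▸ hau) ha)
  rcases reach_comparable' hdeg h1 h2 with h | h
  · exact aux _ _ hq hq' h
  · exact (aux _ _ hq' hq h).symm

lemma exists_leaf_below' {A : ArcSet V} (hac : Acyclic A) :
    ∀ u ∈ nodes A, ∃ l ∈ leaves A, Reach A u l := by
  have key : ∀ n : ℕ, ∀ u ∈ nodes A,
      ((nodes A).filter fun x => SReach A u x).card ≤ n → ∃ l ∈ leaves A, Reach A u l := by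
    intro n
    induction n with
    | zero =>
      intro u hu hcard
      by_cases h0 : outdeg A u = 0
      · exact ⟨u, Finset.mem_filter.mpr ⟨hu, h0⟩, Relation.ReflTransGen.refl⟩
      · exfalso
        obtain ⟨a, ha⟩ := Finset.card_ne_zero.mp h0 |>.exists_mem
        rw [Finset.mem_filter] at ha
        have hm : a.2 ∈ (nodes A).filter fun x => SReach A u x :=
          Finset.mem_filter.mpr ⟨mem_nodes_snd' ha.1,
            Relation.TransGen.single (show arcRel A u a.2 by rw [← ha.2]; exact ha.1)⟩
        have := Finset.card_pos.mpr ⟨a.2, hm⟩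
        omega
    | succ n ih =>
      intro u hu hcard
      by_cases h0 : outdeg A u = 0
      · exact ⟨u, Finset.mem_filter.mpr ⟨hu, h0⟩, Relation.ReflTransGen.refl⟩
      · obtain ⟨a, ha⟩ := Finset.card_ne_zero.mp h0 |>.exists_mem
        rw [Finset.mem_filter] at ha
        have harc : arcRel A u a.2 := by rw [← ha.2]; exact ha.1
        have hm2 : a.2 ∈ nodes A := mem_nodes_snd' ha.1
        have hsub : ((nodes A).filter fun x => SReach A a.2 x) ⊂
            ((nodes A).filter fun x => SReach A u x) := by
          constructor
          · intro x hx
            rw [Finset.mem_filter] at hx ⊢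
            exact ⟨hx.1, Relation.TransGen.head harc hx.2⟩
          · intro hsub'
            have hmem : a.2 ∈ (nodes A).filter fun x => SReach A u x :=
              Finset.mem_filter.mpr ⟨hm2, Relation.TransGen.single harc⟩
            have := Finset.mem_filter.mp (hsub' hmem)
            exact hac a.2 this.2
        have hlt := Finset.card_lt_card hsub
        obtain ⟨l, hl, hr⟩ := ih a.2 hm2 (by omega)
        exact ⟨l, hl, Relation.ReflTransGen.head harc hr⟩
  intro u hu
  exact key _ u hu le_rfl

lemma arc_of_mem_childrenList' {W : Type} [LinearOrder W] {A : ArcSet W} {v q : W}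
    (h : q ∈ childrenList A v) : (v, q) ∈ A := by
  unfold childrenList at h
  rw [Finset.mem_sort] at h
  obtain ⟨a, ha, rfl⟩ := Finset.mem_image.mp h
  rw [Finset.mem_filter] at ha
  have : (a.1, a.2) ∈ A := ha.1
  rwa [ha.2] at this

lemma not_leaf_of_arc' {A : ArcSet V} {x m : V} (h : (x, m) ∈ A) (hx : x ∈ leaves A) : False := by
  have h0 : outdeg A x = 0 := (Finset.mem_filter.mp hx).2
  unfold outdeg at h0
  rw [Finset.card_eq_zero] at h0
  exact (Finset.filter_eq_empty_iff.mp h0 h) rfl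

lemma mem_gammaLeaves' {A : ArcSet V} {q l : V} :
    l ∈ gammaLeaves A q ↔ l ∈ leaves A ∧ Reach A q l := by
  unfold gammaLeaves; exact Finset.mem_filter

lemma mem_leavesBelow' {A : ArcSet V} {y l : V} :
    l ∈ leavesBelow A y ↔ l ∈ leaves A ∧ Reach A y l := by
  unfold leavesBelow; exact Finset.mem_filter

lemma mem_forestLeaves' {A : ArcSet V} {F : Finset (V × V)} {l : V} :
    l ∈ forestLeaves A F ↔ l ∈ leaves A ∧ ∃ a ∈ F, Reach A a.2 l := by
  unfold forestLeaves; exact Finset.mem_filter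

lemma mem_splitPart' {A B : ArcSet V} {q : V} {Y : Finset (V × V)} {b : V × V} :
    b ∈ splitPart A B q Y ↔ b ∈ Y ∧ leavesBelow A b.2 ⊆ gammaLeaves B q := by
  unfold splitPart; exact Finset.mem_filter

lemma mem_GW' {AN AG : ArcSet V} {v : V} {a : V × V} :
    a ∈ GW AN AG v ↔ a ∈ AN ∧ SReach AG a.1 v ∧ Reach AG v a.2 := by
  unfold GW
  constructor
  · intro h; have := Finset.mem_filter.mp h; exact ⟨this.1, this.2.1, this.2.2⟩
  · intro h; exact Finset.mem_filter.mpr ⟨h.1, h.2.1, h.2.2⟩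

lemma mem_inArcs' {A : ArcSet V} {v : V} {a : V × V} :
    a ∈ inArcs A v ↔ a ∈ A ∧ a.2 = v := by
  unfold inArcs; exact Finset.mem_filter

lemma mem_outArcs' {A : ArcSet V} {v : V} {a : V × V} :
    a ∈ outArcs A v ↔ a ∈ A ∧ a.1 = v := by
  unfold outArcs; exact Finset.mem_filter

end StmtNineHelpers

lemma splitPart_inst_indep2 {V : Type} (i1 i2 : DecidableEq V) (A B : ArcSet V) (q : V)
    (Y : Finset (V × V)) : @splitPart V i1 A B q Y = @splitPart V i2 A B q Y := by
  have h : i1 = i2 := by funext a b; exact Subsingleton.elim _ _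
  rw [h]

/-- the three ways of producing new signatures from a signature
`(v, S, ψ, j)` with `j > 0`, where `q_j` is the `j`-th child of `v` in `Γ`,
`S_j = splitPart AT AG q_j S`, `ψ_j` is the restriction of `ψ` to `S_j`, and
`Z = {xy ∈ S : ψ(xy) is an in-arc of v in N}`. -/
theorem stmt9 {V : Type} [LinearOrder V] (AN AG AT : ArcSet V) (v qj : V)
    (S : Finset (V × V)) (psi : V × V → V × V) (j : ℕ)
    (hN : IsNetwork AN) (hG : IsCanonicalTreeExtension AN AG)
    (hT : IsPhyloTree AT) (hleaf : leaves AN = leaves AT)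
    (hsig : IsSignature AN AG AT v S psi j) (hj : 0 < j)
    (hqj : (childrenList AG v)[j - 1]? = some qj) :
    -- (i) if Z = ∅
    ((∀ a ∈ S, psi a ∉ inArcs AN v) →
      IsSignature AN AG AT qj (splitPart AT AG qj S) psi ((childrenList AG qj).length)) ∧
    -- (ii) if Z = {xy}, Y = outArcs of y is v-splittable, vw ∈ outArcs AN v with
    -- L(T_y) ⊆ L(Γ_w), and Y_j = Y
    (∀ a ∈ S, ∀ w : V,
      S.filter (fun b => psi b ∈ inArcs AN v) = {a} →
      VSplittable AT AG v (outArcs AT a.2) →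
      (v, w) ∈ AN →
      leavesBelow AT a.2 ⊆ gammaLeaves AG w →
      splitPart AT AG qj (outArcs AT a.2) = outArcs AT a.2 →
      IsSignature AN AG AT qj (splitPart AT AG qj S)
        (Function.update psi a (v, w)) ((childrenList AG qj).length)) ∧
    -- (iii) if Z = {xy}, Y is v-splittable, Y_j ≠ ∅, and ψ' : Y_j → GW_{q_j}(Γ) is a
    -- valid injective map with image disjoint from ψ_j(S_j ∖ {xy})
    (∀ a ∈ S, ∀ psi' : V × V → V × V,
      S.filter (fun b => psi b ∈ inArcs AN v) = {a} →
      VSplittable AT AG v (outArcs AT a.2) →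
      (splitPart AT AG qj (outArcs AT a.2)).Nonempty →
      (∀ b ∈ splitPart AT AG qj (outArcs AT a.2), psi' b ∈ GW AN AG qj) →
      ValidMap AT AG (splitPart AT AG qj (outArcs AT a.2)) psi' →
      (∀ b ∈ splitPart AT AG qj (outArcs AT a.2),
        ∀ c ∈ (splitPart AT AG qj S).erase a, psi' b ≠ psi c) →
      IsSignature AN AG AT qj
        ((splitPart AT AG qj S).erase a ∪ splitPart AT AG qj (outArcs AT a.2))
        (fun b => if b ∈ splitPart AT AG qj (outArcs AT a.2) then psi' b else psi b)
        ((childrenList AG qj).length)) := by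
  obtain ⟨hGext, -⟩ := hG
  obtain ⟨hGtree, hnodes0, hlift⟩ := hGext
  obtain ⟨hGac, hGdeg0, -⟩ := hGtree
  obtain ⟨hTnet, hTdeg0⟩ := hT
  have hnodes : nodes AG = nodes AN := by convert hnodes0 using 2
  have hGdeg : ∀ x ∈ nodes AG, indeg AG x ≤ 1 := by convert hGdeg0 using 3
  have hTdeg : ∀ x ∈ nodes AT, indeg AT x ≤ 1 := by convert hTdeg0 using 3
  have hTac : Acyclic AT := hTnet.acyclic
  obtain ⟨hvN0, hjle, hTopS0, hGWS, hVal0⟩ := hsig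
  have hTopS : IsTopArcSetFor AT S (gammaLeaves AG v) := by convert hTopS0 using 2
  have hVal : ValidMap AT AG S psi := by convert hVal0 using 2
  obtain ⟨hSsub, hSac, hSfl⟩ := hTopS
  have hInjS : Set.InjOn psi ↑S := hVal.1
  have hValS : ∀ b ∈ S, leavesBelow AT b.2 ⊆ gammaLeaves AG (psi b).2 := hVal.2
  have hqjc : qj ∈ childrenList AG v := by
    obtain ⟨h, rfl⟩ := List.getElem?_eq_some_iff.mp hqj
    exact List.getElem_mem h
  have hvqj : (v, qj) ∈ AG := arc_of_mem_childrenList' hqjc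
  have hqjN : qj ∈ nodes AN := by rw [← hnodes]; exact mem_nodes_snd' hvqj
  -- key transfer lemma
  have keyB : ∀ b ∈ S, (psi b).2 ≠ v → ∀ l, l ∈ leavesBelow AT b.2 → l ∈ gammaLeaves AG qj →
      leavesBelow AT b.2 ⊆ gammaLeaves AG qj ∧ psi b ∈ GW AN AG qj := by
    intro b hb hne l hl hlq
    obtain ⟨hAN, hwv, hvz⟩ := mem_GW'.mp (hGWS b hb)
    have hvalb := hValS b hb
    rcases Relation.ReflTransGen.cases_head hvz with h | ⟨q, hvq, hqz⟩
    · exact absurd h.symm hne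
    · have hlz' := mem_gammaLeaves'.mp (hvalb hl)
      have hlq' := mem_gammaLeaves'.mp hlq
      have hql : Reach AG q l := hqz.trans hlz'.2
      have hqeq : q = qj := child_unique' hGac hGdeg hvq hvqj hql hlq'.2
      subst hqeq
      constructor
      · intro x hx
        have hx' := mem_gammaLeaves'.mp (hvalb hx)
        exact mem_gammaLeaves'.mpr ⟨hx'.1, hqz.trans hx'.2⟩
      · exact mem_GW'.mpr ⟨hAN, Relation.TransGen.tail hwv hvqj, hqz⟩
  have hANmem : ∀ b ∈ S, psi b ∈ AN := fun b hb => (mem_GW'.mp (hGWS b hb)).1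
  have hLBne : ∀ b ∈ S, ∃ l, l ∈ leavesBelow AT b.2 := by
    intro b hb
    obtain ⟨l, hl, hr⟩ := exists_leaf_below' hTac b.2 (mem_nodes_snd' (hSsub hb))
    exact ⟨l, mem_leavesBelow'.mpr ⟨hl, hr⟩⟩
  have hup : ∀ l ∈ gammaLeaves AG qj, l ∈ leaves AT ∧ ∃ b ∈ S, Reach AT b.2 l := by
    intro l hl
    have hl' := mem_gammaLeaves'.mp hl
    have hlv : l ∈ gammaLeaves AG v :=
      mem_gammaLeaves'.mpr ⟨hl'.1, Relation.ReflTransGen.head hvqj hl'.2⟩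
    rw [← hSfl] at hlv
    exact mem_forestLeaves'.mp hlv
  have hdown : ∀ (F : Finset (V × V)), (∀ b ∈ F, leavesBelow AT b.2 ⊆ gammaLeaves AG qj) →
      forestLeaves AT F ⊆ gammaLeaves AG qj := by
    intro F hF l hl
    obtain ⟨hlT, b, hbF, hr⟩ := mem_forestLeaves'.mp hl
    exact hF b hbF (mem_leavesBelow'.mpr ⟨hlT, hr⟩)
  have build : ∀ (S' : Finset (V × V)) (ψ : V × V → V × V),
      S' ⊆ AT → ArcAntichain AT S' → forestLeaves AT S' = gammaLeaves AG qj →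
      (∀ b ∈ S', ψ b ∈ GW AN AG qj) → Set.InjOn ψ ↑S' →
      (∀ b ∈ S', leavesBelow AT b.2 ⊆ gammaLeaves AG (ψ b).2) →
      IsSignature AN AG AT qj S' ψ ((childrenList AG qj).length) := by
    intro S' ψ h1 h2 h3 h4 h5 h6
    refine ⟨?_, le_rfl, ?_, h4, ?_⟩
    · convert hqjN using 2
    · have h : IsTopArcSetFor AT S' (gammaLeaves AG qj) := ⟨h1, h2, h3⟩
      convert h using 2
    · have h : ValidMap AT AG S' ψ := ⟨h5, h6⟩
      convert h using 2
  have hZmem : ∀ a ∈ S, S.filter (fun b => psi b ∈ inArcs AN v) = {a} →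
      ∀ b ∈ S, b ≠ a → (psi b).2 ≠ v := by
    intro a ha hZ b hb hne heq
    have hmem : b ∈ S.filter (fun b => psi b ∈ inArcs AN v) :=
      Finset.mem_filter.mpr ⟨hb, mem_inArcs'.mpr ⟨hANmem b hb, heq⟩⟩
    rw [hZ, Finset.mem_singleton] at hmem
    exact hne hmem
  have hflS : (∀ b ∈ S, ∀ l, l ∈ leavesBelow AT b.2 → l ∈ gammaLeaves AG qj →
        leavesBelow AT b.2 ⊆ gammaLeaves AG qj) →
      forestLeaves AT (splitPart AT AG qj S) = gammaLeaves AG qj := by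
    intro h
    apply Finset.Subset.antisymm
    · exact hdown _ (fun b hb => (mem_splitPart'.mp hb).2)
    · intro l hl
      obtain ⟨hlT, b, hbS, hr⟩ := hup l hl
      have hlb : l ∈ leavesBelow AT b.2 := mem_leavesBelow'.mpr ⟨hlT, hr⟩
      have hsub := h b hbS l hlb hl
      exact mem_forestLeaves'.mpr ⟨hlT, b, mem_splitPart'.mpr ⟨hbS, hsub⟩, hr⟩
  have hsplit_subset : splitPart AT AG qj S ⊆ S := fun b hb => (mem_splitPart'.mp hb).1
  refine ⟨?_, ?_, ?_⟩
  · -- case (i)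
    intro hZ
    have hni : ∀ b ∈ S, (psi b).2 ≠ v := by
      intro b hb heq
      exact hZ b hb (mem_inArcs'.mpr ⟨hANmem b hb, heq⟩)
    apply build
    · exact hsplit_subset.trans hSsub
    · intro p hp q hq
      exact hSac p (hsplit_subset hp) q (hsplit_subset hq)
    · exact hflS (fun b hb l hlb hlq => (keyB b hb (hni b hb) l hlb hlq).1)
    · intro b hb
      obtain ⟨hbS, hbsub⟩ := mem_splitPart'.mp hb
      obtain ⟨l, hl⟩ := hLBne b hbS
      exact (keyB b hbS (hni b hbS) l hl (hbsub hl)).2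
    · exact hInjS.mono (Finset.coe_subset.mpr hsplit_subset)
    · intro b hb
      exact hValS b (hsplit_subset hb)
  · -- case (ii)
    intro a haS w hZ hYsplit hvw hw hYj
    have hni := hZmem a haS hZ
    have haSj' : ∀ l, l ∈ leavesBelow AT a.2 → l ∈ gammaLeaves AG qj →
        leavesBelow AT a.2 ⊆ gammaLeaves AG qj := by
      intro l hl hlq x hx
      obtain ⟨hxT, hr⟩ := mem_leavesBelow'.mp hx
      rcases Relation.ReflTransGen.cases_head hr with heq | ⟨m, ham, hmx⟩
      · obtain ⟨hlT, hrl⟩ := mem_leavesBelow'.mp hl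
        rcases Relation.ReflTransGen.cases_head hrl with h2 | ⟨m, ham, -⟩
        · rw [← heq, h2]; exact hlq
        · exfalso
          rw [← heq] at hxT
          exact not_leaf_of_arc' ham hxT
      · have hco : (a.2, m) ∈ splitPart AT AG qj (outArcs AT a.2) := by
          rw [hYj]
          exact mem_outArcs'.mpr ⟨ham, rfl⟩
        exact (mem_splitPart'.mp hco).2 (mem_leavesBelow'.mpr ⟨hxT, hmx⟩)
    apply build
    · exact hsplit_subset.trans hSsub
    · intro p hp q hq
      exact hSac p (hsplit_subset hp) q (hsplit_subset hq)
    · apply hflS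
      intro b hb l hlb hlq
      by_cases hba : b = a
      · subst hba; exact haSj' l hlb hlq
      · exact (keyB b hb (hni b hb hba) l hlb hlq).1
    · intro b hb
      obtain ⟨hbS, hbsub⟩ := mem_splitPart'.mp hb
      by_cases hba : b = a
      · subst hba
        rw [Function.update_self]
        refine mem_GW'.mpr ⟨hvw, Relation.TransGen.single hvqj, ?_⟩
        have hsvw : SReach AG v w := hlift v w (Relation.TransGen.single hvw)
        obtain ⟨q, hvq, hqw⟩ := Relation.TransGen.head'_iff.mp hsvw
        obtain ⟨l, hl⟩ := hLBne b hbS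
        have h1 : Reach AG qj l := (mem_gammaLeaves'.mp (hbsub hl)).2
        have h2 : Reach AG w l := (mem_gammaLeaves'.mp (hw hl)).2
        have hq : q = qj := child_unique' hGac hGdeg hvq hvqj (hqw.trans h2) h1
        rw [← hq]; exact hqw
      · rw [Function.update_of_ne hba]
        obtain ⟨l, hl⟩ := hLBne b hbS
        exact (keyB b hbS (hni b hbS hba) l hl (hbsub hl)).2
    · intro b hbm c hcm heq
      have hbS := (mem_splitPart'.mp (Finset.mem_coe.mp hbm)).1
      have hcS := (mem_splitPart'.mp (Finset.mem_coe.mp hcm)).1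
      by_cases hba : b = a <;> by_cases hca : c = a
      · rw [hba, hca]
      · exfalso
        rw [hba, Function.update_self, Function.update_of_ne hca] at heq
        have h := mem_GW'.mp (hGWS c hcS)
        rw [← heq] at h
        exact hGac v h.2.1
      · exfalso
        rw [hca, Function.update_self, Function.update_of_ne hba] at heq
        have h := mem_GW'.mp (hGWS b hbS)
        rw [heq] at h
        exact hGac v h.2.1
      · rw [Function.update_of_ne hba, Function.update_of_ne hca] at heq
        exact hInjS (Finset.mem_coe.mpr hbS) (Finset.mem_coe.mpr hcS) heq
    · intro b hb
      obtain ⟨hbS, hbsub⟩ := mem_splitPart'.mp hb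
      by_cases hba : b = a
      · subst hba
        rw [Function.update_self]
        exact hw
      · rw [Function.update_of_ne hba]
        exact hValS b hbS
  · -- case (iii)
    intro a haS psi' hZ hYsplit hYne hGW' hVal' hdisj
    have hni := hZmem a haS hZ
    obtain ⟨c0, hc0⟩ := hYne
    have hc0' := mem_outArcs'.mp (mem_splitPart'.mp hc0).1
    have ha2arc : (a.2, c0.2) ∈ AT := by rw [← hc0'.2]; exact hc0'.1
    have ha2nl : a.2 ∉ leaves AT := fun h => not_leaf_of_arc' ha2arc h
    have hEsub : ∀ b ∈ (splitPart AT AG qj S).erase a, b ∈ S :=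
      fun b hb => (mem_splitPart'.mp (Finset.mem_of_mem_erase hb)).1
    have hYsub : ∀ b ∈ splitPart AT AG qj (outArcs AT a.2), b ∈ AT ∧ b.1 = a.2 :=
      fun b hb => mem_outArcs'.mp (mem_splitPart'.mp hb).1
    have hEY : ∀ b ∈ (splitPart AT AG qj S).erase a, b ∉ splitPart AT AG qj (outArcs AT a.2) := by
      intro b hb hbY
      have hba := Finset.ne_of_mem_erase hb
      have hbS := hEsub b hb
      obtain ⟨hbT, hb1⟩ := hYsub b hbY
      exact hSac b hbS a haS
        ⟨Or.inr (show Reach AT a.2 b.1 by rw [hb1]; exact Relation.ReflTransGen.refl), hba⟩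
    apply build
    · intro b hb
      rcases Finset.mem_union.mp hb with h | h
      · exact hSsub (hEsub b h)
      · exact (hYsub b h).1
    · -- antichain
      intro b hb c hc hlt
      obtain ⟨hle, hne⟩ := hlt
      rw [Finset.mem_union] at hb hc
      rcases hle with heq | hreach
      · exact hne heq
      rcases hb with hbE | hbY
      · rcases hc with hcE | hcY
        · exact hSac b (hEsub b hbE) c (hEsub c hcE) ⟨Or.inr hreach, hne⟩
        · obtain ⟨hcT, hc1⟩ := hYsub c hcY
          have harc : arcRel AT a.2 c.2 := by
            show (a.2, c.2) ∈ AT; rw [← hc1]; exact hcT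
          have hba := Finset.ne_of_mem_erase hbE
          exact hSac b (hEsub b hbE) a haS
            ⟨Or.inr (Relation.ReflTransGen.head harc hreach), hba⟩
      · obtain ⟨hbT, hb1⟩ := hYsub b hbY
        rw [hb1] at hreach
        rcases hc with hcE | hcY
        · have hcS := hEsub c hcE
          have hca := Finset.ne_of_mem_erase hcE
          by_cases h2 : c.2 = a.2
          · have hcT : (c.1, a.2) ∈ AT := by rw [← h2]; exact hSsub hcS
            have haT : (a.1, a.2) ∈ AT := hSsub haS
            have h1 : c.1 = a.1 :=
              eq_of_indeg_le_one' (hTdeg a.2 (mem_nodes_snd' (a := (a.1, a.2)) haT)) hcT haT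
            exact hca (Prod.ext h1 h2)
          · rcases Relation.ReflTransGen.cases_tail hreach with h' | ⟨u, hcu, hua⟩
            · exact h2 h'.symm
            · have haT : (a.1, a.2) ∈ AT := hSsub haS
              have hu : u = a.1 :=
                eq_of_indeg_le_one' (hTdeg a.2 (mem_nodes_snd' (a := (a.1, a.2)) haT)) hua haT
              exact hSac a haS c hcS ⟨Or.inr (hu ▸ hcu), fun h => hca h.symm⟩
        · obtain ⟨hcT, hc1⟩ := hYsub c hcY
          have harc : arcRel AT a.2 c.2 := by
            show (a.2, c.2) ∈ AT; rw [← hc1]; exact hcT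
          exact hTac a.2 (Relation.TransGen.head' harc hreach)
    · -- forestLeaves equation
      apply Finset.Subset.antisymm
      · apply hdown
        intro b hb
        rcases Finset.mem_union.mp hb with h | h
        · exact (mem_splitPart'.mp (Finset.mem_of_mem_erase h)).2
        · exact (mem_splitPart'.mp h).2
      · intro l hl
        obtain ⟨hlT, b, hbS, hr⟩ := hup l hl
        by_cases hba : b = a
        · subst hba
          rcases Relation.ReflTransGen.cases_head hr with heq | ⟨m, ham, hmx⟩
          · exfalso; rw [heq] at ha2nl; exact ha2nl hlT
          · have hcY : (b.2, m) ∈ outArcs AT b.2 := mem_outArcs'.mpr ⟨ham, rfl⟩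
            obtain ⟨q, hq, hmem⟩ := hYsplit _ hcY
            rw [splitPart_inst_indep2 _ (inferInstance : DecidableEq V) _ _ _ _] at hmem
            have hsub : leavesBelow AT m ⊆ gammaLeaves AG q := (mem_splitPart'.mp hmem).2
            have hlm : l ∈ leavesBelow AT m := mem_leavesBelow'.mpr ⟨hlT, hmx⟩
            have hvq : (v, q) ∈ AG := arc_of_mem_childrenList' hq
            have hq1 : Reach AG q l := (mem_gammaLeaves'.mp (hsub hlm)).2
            have hq2 : Reach AG qj l := (mem_gammaLeaves'.mp hl).2
            have hqeq : q = qj := child_unique' hGac hGdeg hvq hvqj hq1 hq2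
            rw [hqeq] at hsub
            have hcYj : (b.2, m) ∈ splitPart AT AG qj (outArcs AT b.2) :=
              mem_splitPart'.mpr ⟨hcY, hsub⟩
            exact mem_forestLeaves'.mpr ⟨hlT, (b.2, m), Finset.mem_union_right _ hcYj, hmx⟩
        · have hlb : l ∈ leavesBelow AT b.2 := mem_leavesBelow'.mpr ⟨hlT, hr⟩
          have hk := keyB b hbS (hni b hbS hba) l hlb hl
          have hbE : b ∈ (splitPart AT AG qj S).erase a :=
            Finset.mem_erase.mpr ⟨hba, mem_splitPart'.mpr ⟨hbS, hk.1⟩⟩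
          exact mem_forestLeaves'.mpr ⟨hlT, b, Finset.mem_union_left _ hbE, hr⟩
    · -- GW
      intro b hb
      rcases Finset.mem_union.mp hb with h | h
      · rw [if_neg (hEY b h)]
        have hbS := hEsub b h
        have hba := Finset.ne_of_mem_erase h
        obtain ⟨l, hl⟩ := hLBne b hbS
        have hbsub := (mem_splitPart'.mp (Finset.mem_of_mem_erase h)).2
        exact (keyB b hbS (hni b hbS hba) l hl (hbsub hl)).2
      · rw [if_pos h]
        exact hGW' b h
    · -- InjOn
      intro b hbm c hcm heq
      have hb' := Finset.mem_union.mp (Finset.mem_coe.mp hbm)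
      have hc' := Finset.mem_union.mp (Finset.mem_coe.mp hcm)
      simp only at heq
      rcases hb' with hbE | hbY
      · rcases hc' with hcE | hcY
        · rw [if_neg (hEY b hbE), if_neg (hEY c hcE)] at heq
          exact hInjS (Finset.mem_coe.mpr (hEsub b hbE)) (Finset.mem_coe.mpr (hEsub c hcE)) heq
        · exfalso
          rw [if_neg (hEY b hbE), if_pos hcY] at heq
          exact hdisj c hcY b hbE heq.symm
      · rcases hc' with hcE | hcY
        · exfalso
          rw [if_pos hbY, if_neg (hEY c hcE)] at heq
          exact hdisj b hbY c hcE heq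
        · rw [if_pos hbY, if_pos hcY] at heq
          exact hVal'.1 (Finset.mem_coe.mpr hbY) (Finset.mem_coe.mpr hcY) heq
    · -- validity
      intro b hb
      rcases Finset.mem_union.mp hb with h | h
      · rw [if_neg (hEY b h)]
        exact hValS b (hEsub b h)
      · rw [if_pos h]
        exact hVal'.2 b h
end

section
/- Let φ be a pseudo-embedding of a tree T into a network N on the same leaf set, let Γ be a canonical tree extension of N, let ρ_N be the root of N, and assume that the origin of the path φ(a_T), where a_T is the unique arc leaving the root of T, is ρ_N. For a node q of N with q ≠ ρ_N, let T_{φ,Γ,q} denote the subgraph of T induced by all arcs xy of T with φ(y) ≤_Γ q. Then: (a) T_{φ,Γ,q} is a downward-closed subforest of T; (b) the leaf set of T_{φ,Γ,q} equals L(Γ_q); and (c) the top arcs of T_{φ,Γ,q} are exactly those arcs xy of T for which the path φ(xy) contains an arc of GW_q(Γ). -/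
namespace Phylo

noncomputable section

attribute [local instance] Classical.propDecidable

end

end Phylo

open Phylo

attribute [local instance] Classical.propDecidable

/-!
Since `φ(xy)` is a path from `φ(x)` to `φ(y)` and `≤_N` is contained in `≤_Γ`, the arcs of
`T_{φ,Γ,q}` are closed under passing to child arcs, so `T_{φ,Γ,q}` is downward closed. A
canonical tree extension has the same leaves as `N`, and an arc of `T` entering a leaf `ℓ` lies
in `T_{φ,Γ,q}` iff `ℓ ≤_Γ q`; this gives (b), and non-emptiness since `q` lies above a leaf.

For (c), an arc `xy` of `T_{φ,Γ,q}` is a top arc iff `φ(xy)` starts outside `Γ_q`. The start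
is `ρ_N`, the root of `Γ`, if `xy` is the root arc, and otherwise the end of the path of the
parent arc of `xy`, which therefore lies in `T_{φ,Γ,q}` iff the start is in `Γ_q`; conversely,
`φ` is monotone, so no arc above `xy` lies in `T_{φ,Γ,q}` when the start is outside `Γ_q`. A
path starting outside `Γ_q` and ending inside it enters `Γ_q` through an arc of `GW_q(Γ)`, and a
path through an arc of `GW_q(Γ)` starts strictly above `q` in `Γ`.
-/

namespace Phylo

section Digraph

variable {V : Type} {A : ArcSet V}

lemma Acyclic.not_mem_self {v : V} (hA : Acyclic A) : (v, v) ∉ A :=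
  fun h => hA v (Relation.TransGen.single h)

lemma Acyclic.not_reach_of_sReach {u v : V} (hA : Acyclic A) (huv : SReach A u v) :
    ¬ Reach A v u :=
  fun hvu => hA u (huv.trans_left hvu)

lemma sReach_of_reach_of_ne {u v : V} (h : Reach A u v) (hne : u ≠ v) : SReach A u v :=
  (Relation.reflTransGen_iff_eq_or_transGen.mp h).resolve_left hne.symm

variable [DecidableEq V]

lemma fst_mem_nodes {u v : V} (h : (u, v) ∈ A) : u ∈ nodes A :=
  Finset.mem_union_left _ (Finset.mem_image_of_mem _ h)

lemma snd_mem_nodes_s15 {u v : V} (h : (u, v) ∈ A) : v ∈ nodes A :=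
  Finset.mem_union_right _ (Finset.mem_image_of_mem Prod.snd h)

lemma indeg_eq_zero_iff {v : V} : indeg A v = 0 ↔ ∀ u, (u, v) ∉ A := by
  simp only [indeg, Finset.card_eq_zero, Finset.filter_eq_empty_iff]
  exact ⟨fun h u hu => h hu rfl, fun h a ha hav => h a.1 (hav ▸ ha)⟩

lemma outdeg_eq_zero_iff {v : V} : outdeg A v = 0 ↔ ∀ w, (v, w) ∉ A := by
  simp only [outdeg, Finset.card_eq_zero, Finset.filter_eq_empty_iff]
  exact ⟨fun h w hw => h hw rfl, fun h a ha hav => h a.2 (hav ▸ ha)⟩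

lemma eq_of_indeg_le_one {u w v : V} (hv : indeg A v ≤ 1) (hu : (u, v) ∈ A)
    (hw : (w, v) ∈ A) : u = w :=
  congrArg Prod.fst (Finset.card_le_one.mp hv _ (Finset.mem_filter.mpr ⟨hu, rfl⟩) _
    (Finset.mem_filter.mpr ⟨hw, rfl⟩))

lemma eq_of_outdeg_le_one {v u w : V} (hv : outdeg A v ≤ 1) (hu : (v, u) ∈ A)
    (hw : (v, w) ∈ A) : u = w :=
  congrArg Prod.snd (Finset.card_le_one.mp hv _ (Finset.mem_filter.mpr ⟨hu, rfl⟩) _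
    (Finset.mem_filter.mpr ⟨hw, rfl⟩))

lemma mem_leaves {l : V} : l ∈ leaves A ↔ l ∈ nodes A ∧ ∀ w, (l, w) ∉ A := by
  rw [leaves, Finset.mem_filter, outdeg_eq_zero_iff]

lemma exists_leaf_reach (hA : Acyclic A) {q : V} (hq : q ∈ nodes A) :
    ∃ l ∈ leaves A, Reach A q l := by
  let desc : V → Finset V := fun w => (nodes A).filter (SReach A w)
  obtain ⟨l, hl, hmin⟩ := ((nodes A).filter (Reach A q)).exists_min_image
    (fun w => (desc w).card) ⟨q, Finset.mem_filter.mpr ⟨hq, .refl⟩⟩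
  rw [Finset.mem_filter] at hl
  refine ⟨l, mem_leaves.mpr ⟨hl.1, fun c hlc => ?_⟩, hl.2⟩
  have hsub : desc c ⊂ desc l := by
    refine Finset.ssubset_iff_of_subset (fun w hw => ?_) |>.mpr ⟨c, ?_, fun hc => ?_⟩
    · rw [Finset.mem_filter] at hw ⊢
      exact ⟨hw.1, hw.2.head hlc⟩
    · exact Finset.mem_filter.mpr ⟨snd_mem_nodes_s15 hlc, .single hlc⟩
    · exact hA c (Finset.mem_filter.mp hc).2
  have := hmin c (Finset.mem_filter.mpr ⟨snd_mem_nodes_s15 hlc, hl.2.tail hlc⟩)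
  exact (Finset.card_lt_card hsub).not_ge this

lemma reach_total_of_indeg_le_one {u v z : V} (hA : ∀ v ∈ nodes A, indeg A v ≤ 1)
    (hu : Reach A u z) (hv : Reach A v z) : Reach A u v ∨ Reach A v u := by
  induction hu using Relation.ReflTransGen.head_induction_on with
  | refl => exact Or.inr hv
  | head hac _ ih =>
    rcases ih with h | h
    · exact Or.inl (h.head hac)
    · rcases Relation.ReflTransGen.cases_tail h with rfl | ⟨w, hvw, hwc⟩
      · exact Or.inl (.single hac)
      · obtain rfl := eq_of_indeg_le_one (hA _ (snd_mem_nodes_s15 hac)) hwc hac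
        exact Or.inr hvw

lemma IsNetwork.exists_arc_of_ne_root (hA : IsNetwork A) {r v : V} (hr : r ∈ nodes A)
    (hr0 : indeg A r = 0) (hv : v ∈ nodes A) (hvr : v ≠ r) : ∃ u, (u, v) ∈ A := by
  by_contra! h
  exact hvr (hA.unique_root.unique ⟨hv, indeg_eq_zero_iff.mpr h⟩ ⟨hr, hr0⟩)

lemma IsNetwork.exists_arc_into_leaf (hA : IsNetwork A) {r t l : V} (hrt : (r, t) ∈ A)
    (hr0 : indeg A r = 0) (hl : l ∈ leaves A) : ∃ u, (u, l) ∈ A := by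
  rw [mem_leaves] at hl
  refine hA.exists_arc_of_ne_root (fst_mem_nodes hrt) hr0 hl.1 ?_
  rintro rfl
  exact hl.2 t hrt

lemma IsNetwork.outdeg_root (hA : IsNetwork A) {r t : V} (hrt : (r, t) ∈ A)
    (hr0 : indeg A r = 0) : outdeg A r = 1 :=
  (hA.degree_cond r (fst_mem_nodes hrt)).resolve_left (by omega)

end Digraph

section Paths

variable {V : Type} {r : V → V → Prop}

lemma rel_of_mem_pathArcs_s15 :
    ∀ {p : List V} {e : V × V}, p.IsChain r → e ∈ pathArcs p → r e.1 e.2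
  | [], _, _, he | [_], _, _, he => by simp [pathArcs] at he
  | a :: b :: t, e, hc, he => by
    rw [List.isChain_cons_cons] at hc
    rcases List.mem_cons.mp he with rfl | he
    · exact hc.1
    · exact rel_of_mem_pathArcs_s15 hc.2 he

lemma reflTransGen_of_head?_of_getLast? {p : List V} {h g : V} (hc : p.IsChain r)
    (hh : p.head? = some h) (hg : p.getLast? = some g) : Relation.ReflTransGen r h g := by
  obtain ⟨t, rfl⟩ := List.head?_eq_some_iff.mp hh
  exact List.relationReflTransGen_of_exists_isChain_cons t hc
    (Option.some.inj (by rw [← hg, List.getLast?_eq_some_getLast]))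

lemma reflTransGen_head?_fst : ∀ {p : List V} {e : V × V} {h : V}, p.IsChain r →
    e ∈ pathArcs p → p.head? = some h → Relation.ReflTransGen r h e.1
  | [], _, _, _, he, _ | [_], _, _, _, he, _ => by simp [pathArcs] at he
  | a :: b :: t, e, h, hc, he, hh => by
    obtain rfl : a = h := Option.some.inj hh
    rw [List.isChain_cons_cons] at hc
    rcases List.mem_cons.mp he with rfl | he
    · exact .refl
    · exact .head hc.1 (reflTransGen_head?_fst hc.2 he rfl)

lemma reflTransGen_snd_getLast? : ∀ {p : List V} {e : V × V} {g : V}, p.IsChain r →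
    e ∈ pathArcs p → p.getLast? = some g → Relation.ReflTransGen r e.2 g
  | [], _, _, _, he, _ | [_], _, _, _, he, _ => by simp [pathArcs] at he
  | a :: b :: t, e, g, hc, he, hg => by
    rw [List.isChain_cons_cons] at hc
    rw [List.getLast?_cons_cons] at hg
    rcases List.mem_cons.mp he with rfl | he
    · exact reflTransGen_of_head?_of_getLast? hc.2 rfl hg
    · exact reflTransGen_snd_getLast? hc.2 he hg

lemma exists_mem_pathArcs_enter {P : V → Prop} : ∀ {p : List V} {h g : V},
    p.head? = some h → p.getLast? = some g → ¬ P h → P g →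
      ∃ e ∈ pathArcs p, ¬ P e.1 ∧ P e.2
  | [], _, _, hh, _, _, _ => by simp at hh
  | [a], h, g, hh, hg, hPh, hPg => by
    obtain rfl : a = h := Option.some.inj hh
    obtain rfl : a = g := Option.some.inj hg
    exact absurd hPg hPh
  | a :: b :: t, h, g, hh, hg, hPh, hPg => by
    obtain rfl : a = h := Option.some.inj hh
    rw [List.getLast?_cons_cons] at hg
    by_cases hPb : P b
    · exact ⟨(a, b), List.mem_cons_self, hPh, hPb⟩
    · obtain ⟨e, he, hPe⟩ := exists_mem_pathArcs_enter rfl hg hPb hPg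
      exact ⟨e, List.mem_cons_of_mem _ he, hPe⟩

lemma IsDipath.ne_nil [DecidableEq V] {A : ArcSet V} {p : List V} (hp : IsDipath A p) :
    p ≠ [] := by
  rintro rfl
  simp [IsDipath] at hp

end Paths

section TreeExtension

variable {V : Type} [DecidableEq V] {AN AG : ArcSet V}

lemma IsTreeExtension.reach (hG : IsTreeExtension AN AG) {u v : V} (h : Reach AN u v) :
    Reach AG u v :=
  Relation.ReflTransGen.lift' id
    (fun _ _ hab => (hG.2.2 _ _ (.single hab)).to_reflTransGen) u v h

lemma IsTreeExtension.leaves_subset (hG : IsTreeExtension AN AG) : leaves AG ⊆ leaves AN := by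
  intro v hv
  rw [mem_leaves] at hv ⊢
  refine ⟨hG.2.1 ▸ hv.1, fun w hvw => ?_⟩
  obtain ⟨c, hvc, -⟩ := Relation.TransGen.head'_iff.mp (hG.2.2 v w (.single hvw))
  exact hv.2 c hvc

/-- Canonicity rules out a leaf `v` of `N` with a child in `Γ`: since `Γ_v` is weakly
connected in `N`, some arc of `N` joins `v` to a node of `Γ_v`, but no arc of `N` leaves
`v`, and one entering `v` would come from below `v` in `Γ`. -/
lemma IsCanonicalTreeExtension.leaves_eq (hG : IsCanonicalTreeExtension AN AG) :
    leaves AG = leaves AN := by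
  refine subset_antisymm hG.1.leaves_subset fun v hv => ?_
  rw [mem_leaves] at hv ⊢
  have hvG : v ∈ nodes AG := hG.1.2.1 ▸ hv.1
  refine ⟨hvG, fun c hvc => ?_⟩
  have hacyc := hG.1.1.1
  have hconn := hG.2 v hvG v (Finset.mem_filter.mpr ⟨hvG, .refl⟩) c
    (Finset.mem_filter.mpr ⟨snd_mem_nodes_s15 hvc, .single hvc⟩)
  rcases Relation.ReflTransGen.cases_head hconn with rfl | ⟨y, ⟨-, hy, hvy | hyv⟩, -⟩
  · exact hacyc.not_mem_self hvc
  · exact hv.2 y hvy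
  · exact hacyc.not_reach_of_sReach (hG.1.2.2 y v (.single hyv)) (Finset.mem_filter.mp hy).2

lemma IsTreeExtension.not_reach_root (hG : IsTreeExtension AN AG) (hN : IsNetwork AN)
    {rootN q : V} (hrootN : rootN ∈ nodes AN) (hrootNdeg : indeg AN rootN = 0)
    (hq : q ∈ nodes AN) (hqne : q ≠ rootN) : ¬ Reach AG q rootN := by
  obtain ⟨hacyc, -, r, hr, hr0, hrall⟩ := hG.1
  have hrN : r = rootN := by
    by_contra hne
    obtain ⟨u, hur⟩ := hN.exists_arc_of_ne_root hrootN hrootNdeg (hG.2.1 ▸ hr) hne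
    obtain ⟨c, -, hcr⟩ := Relation.TransGen.tail'_iff.mp (hG.2.2 u r (.single hur))
    exact indeg_eq_zero_iff.mp hr0 c hcr
  subst hrN
  exact hacyc.not_reach_of_sReach (sReach_of_reach_of_ne (hrall q (hG.2.1 ▸ hq)) hqne.symm)

end TreeExtension

section Forest

variable {V : Type} {A F : ArcSet V}

lemma mem_of_reach_of_closed (hF : ∀ x y z, (x, y) ∈ F → (y, z) ∈ A → (y, z) ∈ F)
    {x y c d : V} (hxy : (x, y) ∈ F) (hyc : Reach A y c) (hcd : (c, d) ∈ A) : (c, d) ∈ F := by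
  induction hyc generalizing d with
  | refl => exact hF x y d hxy hcd
  | tail _ hbc ih => exact hF _ _ d (ih hbc) hcd

lemma below_eq_self (hFA : F ⊆ A)
    (hF : ∀ x y z, (x, y) ∈ F → (y, z) ∈ A → (y, z) ∈ F) : below A F = F := by
  ext a
  refine ⟨fun ha => ?_, fun ha => Finset.mem_filter.mpr ⟨hFA ha, a, ha, Or.inl rfl⟩⟩
  obtain ⟨haA, s, hs, rfl | hsa⟩ := Finset.mem_filter.mp ha
  · exact hs
  · exact mem_of_reach_of_closed hF hs hsa haA

variable [DecidableEq V]

lemma mem_forestLeaves_of_closed (hF : ∀ x y z, (x, y) ∈ F → (y, z) ∈ A → (y, z) ∈ F)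
    {l : V} : l ∈ forestLeaves A F ↔ l ∈ leaves A ∧ ∃ w, (w, l) ∈ F := by
  refine Finset.mem_filter.trans (and_congr_right fun _ => ⟨?_, ?_⟩)
  · rintro ⟨a, ha, hal⟩
    rcases Relation.ReflTransGen.cases_tail hal with rfl | ⟨c, hac, hcl⟩
    · exact ⟨a.1, ha⟩
    · exact ⟨c, mem_of_reach_of_closed hF ha hac hcl⟩
  · rintro ⟨w, hw⟩
    exact ⟨(w, l), hw, .refl⟩

end Forest

section PseudoEmbedding

variable {V : Type} [DecidableEq V] {AT AN : ArcSet V} {phi : V × V → List V}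

lemma IsPseudoEmbedding.reach_getLast?_head? (hphi : IsPseudoEmbedding AT AN AT phi)
    {w c x y z h : V} (hwc : (w, c) ∈ AT) (hxy : (x, y) ∈ AT) (hcx : Reach AT c x)
    (hz : (phi (w, c)).getLast? = some z) (hh : (phi (x, y)).head? = some h) :
    Reach AN z h := by
  induction hcx generalizing y h with
  | refl =>
    obtain rfl := Option.some.inj (hz.symm.trans ((hphi.comp w c y hwc hxy).trans hh))
    exact .refl
  | @tail b x _ hbx ih =>
    have hne := (hphi.isPath _ hbx).ne_nil
    exact (ih hbx (List.head?_eq_some_head hne)).trans <|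
      reflTransGen_of_head?_of_getLast? (hphi.isPath _ hbx).2 (List.head?_eq_some_head hne)
        ((hphi.comp b x y hbx hxy).trans hh)

end PseudoEmbedding

/-- The arc set of `T_{φ,Γ,q}`. -/
noncomputable def pullbackForest {V : Type} [DecidableEq V] (AT AG : ArcSet V)
    (phi : V × V → List V) (q : V) : Finset (V × V) :=
  AT.filter fun a => ∃ z : V, (phi a).getLast? = some z ∧ Reach AG q z

section PullbackForest

variable {V : Type} [DecidableEq V] {AN AG AT : ArcSet V} {phi : V × V → List V} {q : V}

lemma pullbackForest_closed (hG : IsTreeExtension AN AG)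
    (hphi : IsPseudoEmbedding AT AN AT phi) (x y c : V)
    (hxy : (x, y) ∈ pullbackForest AT AG phi q) (hyc : (y, c) ∈ AT) :
    (y, c) ∈ pullbackForest AT AG phi q := by
  obtain ⟨hxyT, z, hz, hqz⟩ := Finset.mem_filter.mp hxy
  have hne := (hphi.isPath _ hyc).ne_nil
  have hzg : Reach AN z _ := reflTransGen_of_head?_of_getLast? (hphi.isPath _ hyc).2
    ((hphi.comp x y c hxyT hyc).symm.trans hz) (List.getLast?_eq_some_getLast hne)
  exact Finset.mem_filter.mpr
    ⟨hyc, _, List.getLast?_eq_some_getLast hne, hqz.trans (hG.reach hzg)⟩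

lemma mem_pullbackForest_of_mem_leaves (hphi : IsPseudoEmbedding AT AN AT phi) {w l : V}
    (hwl : (w, l) ∈ AT) (hl : l ∈ leaves AT) :
    (w, l) ∈ pullbackForest AT AG phi q ↔ Reach AG q l := by
  simp only [pullbackForest, Finset.mem_filter, hphi.leaf w l hwl hl, Option.some.injEq,
    exists_eq_left', hwl, true_and]

lemma forestLeaves_pullbackForest (hG : IsCanonicalTreeExtension AN AG)
    (hphi : IsPseudoEmbedding AT AN AT phi) (hleaf : leaves AN = leaves AT)
    (hin : ∀ l ∈ leaves AT, ∃ w, (w, l) ∈ AT) :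
    forestLeaves AT (pullbackForest AT AG phi q) = gammaLeaves AG q := by
  ext l
  rw [mem_forestLeaves_of_closed (pullbackForest_closed hG.1 hphi), gammaLeaves,
    Finset.mem_filter, hG.leaves_eq, hleaf]
  refine and_congr_right fun hl => ⟨fun ⟨w, hw⟩ => ?_, fun hql => ?_⟩
  · exact (mem_pullbackForest_of_mem_leaves hphi (Finset.mem_filter.mp hw).1 hl).mp hw
  · obtain ⟨w, hwl⟩ := hin l hl
    exact ⟨w, (mem_pullbackForest_of_mem_leaves hphi hwl hl).mpr hql⟩

lemma isDCSubforest_pullbackForest (hG : IsCanonicalTreeExtension AN AG)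
    (hphi : IsPseudoEmbedding AT AN AT phi) (hleaf : leaves AN = leaves AT)
    (hin : ∀ l ∈ leaves AT, ∃ w, (w, l) ∈ AT) (hq : q ∈ nodes AG) :
    IsDCSubforest AT (pullbackForest AT AG phi q) := by
  obtain ⟨l, hl, hql⟩ := exists_leaf_reach hG.1.1.1 hq
  have hlF : l ∈ forestLeaves AT (pullbackForest AT AG phi q) := by
    rw [forestLeaves_pullbackForest hG hphi hleaf hin]
    exact Finset.mem_filter.mpr ⟨hl, hql⟩
  obtain ⟨-, a, ha, -⟩ := Finset.mem_filter.mp hlF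
  exact ⟨_, Finset.filter_subset _ _, ⟨a, ha⟩,
    (below_eq_self (Finset.filter_subset _ _) (pullbackForest_closed hG.1 hphi)).symm⟩

lemma mem_topArcs_pullbackForest_iff (hG : IsTreeExtension AN AG)
    (hphi : IsPseudoEmbedding AT AN AT phi) (hT : IsNetwork AT) {rootT rootN : V}
    (hrootT : rootT ∈ nodes AT) (hrootTdeg : indeg AT rootT = 0)
    (hstart : ∀ y, (rootT, y) ∈ AT → (phi (rootT, y)).head? = some rootN)
    (hqroot : ¬ Reach AG q rootN) {a : V × V} :
    a ∈ topArcs AT (pullbackForest AT AG phi q) ↔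
      a ∈ pullbackForest AT AG phi q ∧ ∀ h, (phi a).head? = some h → ¬ Reach AG q h := by
  obtain ⟨x, y⟩ := a
  refine ⟨fun ha => ?_, fun ⟨haF, hout⟩ => Finset.mem_filter.mpr ⟨haF, ?_⟩⟩
  · obtain ⟨haF, hmax⟩ := Finset.mem_filter.mp ha
    have hxy := (Finset.mem_filter.mp haF).1
    refine ⟨haF, fun h hh hqh => ?_⟩
    by_cases hx : x = rootT
    · subst hx
      exact hqroot (Option.some.inj ((hstart y hxy).symm.trans hh) ▸ hqh)
    · obtain ⟨w, hwx⟩ := hT.exists_arc_of_ne_root hrootT hrootTdeg (fst_mem_nodes hxy) hx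
      have hwxF : (w, x) ∈ pullbackForest AT AG phi q :=
        Finset.mem_filter.mpr ⟨hwx, h, (hphi.comp w x y hwx hxy).trans hh, hqh⟩
      obtain ⟨rfl, rfl⟩ := Prod.mk.inj (hmax _ hwxF (Or.inr .refl))
      exact hT.acyclic.not_mem_self hxy
  · rintro ⟨u, c⟩ hbF (heq | hcx)
    · exact heq
    · obtain ⟨huc, z, hz, hqz⟩ := Finset.mem_filter.mp hbF
      have hxy := (Finset.mem_filter.mp haF).1
      have hh := List.head?_eq_some_head (hphi.isPath _ hxy).ne_nil
      exact absurd (hqz.trans (hG.reach (hphi.reach_getLast?_head? huc hxy hcx hz hh)))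
        (hout _ hh)

/-- The arc where the path enters `Γ_q` lies in `GW_q(Γ)` because the ancestors of a node of
the tree `Γ` are totally ordered. -/
lemma mem_pullbackForest_and_head_not_below_iff (hG : IsTreeExtension AN AG)
    (hphi : IsPseudoEmbedding AT AN AT phi) {a : V × V} :
    (a ∈ pullbackForest AT AG phi q ∧ ∀ h, (phi a).head? = some h → ¬ Reach AG q h) ↔
      a ∈ AT ∧ ∃ e ∈ pathArcs (phi a), e ∈ GW AN AG q := by
  obtain ⟨hacyc, hdeg, -⟩ := hG.1
  refine ⟨fun ⟨haF, hout⟩ => ?_, fun ⟨ha, e, he, heGW⟩ => ?_⟩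
  · obtain ⟨ha, g, hg, hqg⟩ := Finset.mem_filter.mp haF
    have hh := List.head?_eq_some_head (hphi.isPath _ ha).ne_nil
    obtain ⟨e, he, hqe1, hqe2⟩ := exists_mem_pathArcs_enter (P := Reach AG q) hh hg
      (hout _ hh) hqg
    have heN := rel_of_mem_pathArcs_s15 (hphi.isPath _ ha).2 he
    have he1q : Reach AG e.1 q :=
      (reach_total_of_indeg_le_one hdeg (hG.reach (.single heN)) hqe2).resolve_right hqe1
    have hne : e.1 ≠ q := fun h => hqe1 (h ▸ .refl)
    exact ⟨ha, e, he, Finset.mem_filter.mpr ⟨heN, sReach_of_reach_of_ne he1q hne, hqe2⟩⟩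
  · obtain ⟨heN, he1q, hqe2⟩ := Finset.mem_filter.mp heGW
    have hpath := (hphi.isPath _ ha).2
    have hg := List.getLast?_eq_some_getLast (hphi.isPath _ ha).ne_nil
    refine ⟨Finset.mem_filter.mpr ⟨ha, _, hg, hqe2.trans
      (hG.reach (reflTransGen_snd_getLast? hpath he hg))⟩, fun h hh hqh => ?_⟩
    exact hacyc.not_reach_of_sReach he1q
      (hqh.trans (hG.reach (reflTransGen_head?_fst hpath he hh)))

lemma topArcs_pullbackForest (hG : IsTreeExtension AN AG)
    (hphi : IsPseudoEmbedding AT AN AT phi) (hT : IsNetwork AT) {rootT rootN : V}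
    (hrootT : rootT ∈ nodes AT) (hrootTdeg : indeg AT rootT = 0)
    (hstart : ∀ y, (rootT, y) ∈ AT → (phi (rootT, y)).head? = some rootN)
    (hqroot : ¬ Reach AG q rootN) :
    topArcs AT (pullbackForest AT AG phi q) =
      AT.filter fun a => ∃ e ∈ pathArcs (phi a), e ∈ GW AN AG q := by
  ext a
  rw [mem_topArcs_pullbackForest_iff hG hphi hT hrootT hrootTdeg hstart hqroot,
    mem_pullbackForest_and_head_not_below_iff hG hphi, Finset.mem_filter]

end PullbackForest

end Phylo

/-- for a pseudo-embedding `φ` of a tree `T` into a network `N` with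
canonical tree extension `Γ`, whose path for the root arc of `T` starts at the root
`ρ_N` of `N`, and any node `q ≠ ρ_N` of `N`, the subgraph `T_{φ,Γ,q}` of `T` induced
by the arcs `xy` with `φ(y) ≤_Γ q` satisfies: (a) it is a downward-closed subforest of
`T`; (b) its leaf set is `L(Γ_q)`; (c) its top arcs are exactly the arcs `xy` of `T`
whose path `φ(xy)` contains an arc of `GW_q(Γ)`. -/
theorem stmt15 {V : Type} [DecidableEq V] (AN AG AT : ArcSet V)
    (phi : V × V → List V) (rootN rootT t0 q : V)
    (hN : IsNetwork AN) (hG : IsCanonicalTreeExtension AN AG)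
    (hT : IsPhyloTree AT) (hleaf : leaves AN = leaves AT)
    (hphi : IsPseudoEmbedding AT AN AT phi)
    (hrootN : rootN ∈ nodes AN) (hrootNdeg : indeg AN rootN = 0)
    (hrootT : (rootT, t0) ∈ AT) (hrootTdeg : indeg AT rootT = 0)
    (horigin : (phi (rootT, t0)).head? = some rootN)
    (hq : q ∈ nodes AN) (hqne : q ≠ rootN) :
    IsDCSubforest AT
      (AT.filter fun a => ∃ z : V, (phi a).getLast? = some z ∧ Reach AG q z) ∧
    forestLeaves AT
      (AT.filter fun a => ∃ z : V, (phi a).getLast? = some z ∧ Reach AG q z) =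
        gammaLeaves AG q ∧
    topArcs AT
      (AT.filter fun a => ∃ z : V, (phi a).getLast? = some z ∧ Reach AG q z) =
        AT.filter fun a => ∃ e ∈ pathArcs (phi a), e ∈ GW AN AG q := by
  have hin : ∀ l ∈ leaves AT, ∃ w, (w, l) ∈ AT := fun l hl =>
    hT.1.exists_arc_into_leaf hrootT hrootTdeg hl
  have hstart : ∀ y, (rootT, y) ∈ AT → (phi (rootT, y)).head? = some rootN := fun y hy => by
    rw [← eq_of_outdeg_le_one (hT.1.outdeg_root hrootT hrootTdeg).le hrootT hy, horigin]
  have hqroot : ¬ Reach AG q rootN := hG.1.not_reach_root hN hrootN hrootNdeg hq hqne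
  exact ⟨isDCSubforest_pullbackForest hG hphi hleaf hin (hG.1.2.1 ▸ hq),
    forestLeaves_pullbackForest hG hphi hleaf hin,
    topArcs_pullbackForest hG.1 hphi hT.1 (fst_mem_nodes hrootT) hrootTdeg hstart hqroot⟩
end
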